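/- For m ≥ 2 let C = C_{2m}(1,1) be the 2m×2m real matrix whose (i, i+1) entry is 1 for 1 ≤ i ≤ 2m−1, whose (m−1, m+1) entry is 1, whose (m, m+2) entry is −1, and whose other entries are 0. Let P_m(x) = U_m(x) − U_{m−1}(x) − U_{m−2}(x), where U_k is the k-th Chebyshev polynomial of the second kind, and let λ_m be the largest real root of P_m. Define vectors in ℂ^{2m} (coordinates indexed by k = 1, …, 2m): v_0 with v_0(k) = U_{k−1}(λ_m) for 1 ≤ k ≤ m−1, v_0(k) = (1/2)U_{m−1}(λ_m) for k ∈ {m, m+1}, and v_0(k) = 0 for m+2 ≤ k ≤ 2m; v_{π/4} with, for η = e^{−iπ/4}, a = 1/(1+η), q = (1−conj(η))/(1+η), v_{π/4}(k) = η^{k−1}U_{k−1}(λ_m) for 1 ≤ k ≤ m−1, v_{π/4}(k) = η^{k−1}·a·U_{m−1}(λ_m) for k ∈ {m, m+1}, and v_{π/4}(k) = η^{k−1}·q·U_{2m−k}(λ_m) for m+2 ≤ k ≤ 2m; and v_{π/2} with, for β = (1+i)/2, v_{π/2}(k) = (−i)^{k−1}U_{k−1}(λ_m) for 1 ≤ k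 ≤ m−1, v_{π/2}(k) = (−i)^{k−1}·β·U_{m−1}(λ_m) for k ∈ {m, m+1}, and v_{π/2}(k) = (−i)^{k−1}U_{2m−k}(λ_m) for m+2 ≤ k ≤ 2m. Then λ_m is the largest eigenvalue of each of H_C(0), H_C(−π/4) and H_C(−π/2), and H_C(0)·v_0 = λ_m·v_0, H_C(−π/4)·v_{π/4} = λ_m·v_{π/4}, H_C(−π/2)·v_{π/2} = λ_m·v_{π/2}. -/
import Mathlib
set_option maxHeartbeats 4000000


open Matrix Complex Polynomial

/-- `H_M(θ) = (1/2)(e^{-iθ} M + e^{iθ} Mᴴ)`. -/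
noncomputable def Hmat {ι : Type*} [Fintype ι] [DecidableEq ι]
    (M : Matrix ι ι ℂ) (θ : ℝ) : Matrix ι ι ℂ :=
  (1 / 2 : ℂ) • (Complex.exp (-(θ : ℂ) * Complex.I) • M
    + Complex.exp ((θ : ℂ) * Complex.I) • Mᴴ)

/-- The matrix `C_{2m}(1,1)` (0-based indices: superdiagonal `1`,
entry `(m-2, m)` equal to `1`, entry `(m-1, m+1)` equal to `-1`). -/
noncomputable def C2m (m : ℕ) : Matrix (Fin (2 * m)) (Fin (2 * m)) ℂ :=
  fun i i' =>
    (if (i' : ℕ) = (i : ℕ) + 1 then 1 else 0)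
    + (if (i : ℕ) = m - 2 ∧ (i' : ℕ) = m then 1 else 0)
    - (if (i : ℕ) = m - 1 ∧ (i' : ℕ) = m + 1 then 1 else 0)

/-- `U_j(x)` for the Chebyshev polynomials of the second kind, over `ℝ`. -/
noncomputable def ur (j : ℤ) (x : ℝ) : ℝ := (Polynomial.Chebyshev.U ℝ j).eval x

/-- The vector `v₀` (0-based coordinate `i` corresponds to `k = i + 1`). -/
noncomputable def v0 (m : ℕ) (lam : ℝ) : Fin (2 * m) → ℂ := fun i =>
  if (i : ℕ) < m - 1 then ((ur (i : ℕ) lam : ℝ) : ℂ)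
  else if (i : ℕ) ≤ m then ((1 / 2 * ur ((m : ℤ) - 1) lam : ℝ) : ℂ)
  else 0

/-- The vector `v_{π/4}`. -/
noncomputable def vq (m : ℕ) (lam : ℝ) : Fin (2 * m) → ℂ := fun i =>
  (Complex.exp (-(Real.pi / 4 : ℝ) * Complex.I)) ^ (i : ℕ) *
    (if (i : ℕ) < m - 1 then ((ur (i : ℕ) lam : ℝ) : ℂ)
     else if (i : ℕ) ≤ m then
       (1 / (1 + Complex.exp (-(Real.pi / 4 : ℝ) * Complex.I))) *
         ((ur ((m : ℤ) - 1) lam : ℝ) : ℂ)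
     else ((1 - starRingEnd ℂ (Complex.exp (-(Real.pi / 4 : ℝ) * Complex.I))) /
         (1 + Complex.exp (-(Real.pi / 4 : ℝ) * Complex.I))) *
       ((ur (2 * (m : ℤ) - 1 - (i : ℕ)) lam : ℝ) : ℂ))

/-- The vector `v_{π/2}`. -/
noncomputable def vh (m : ℕ) (lam : ℝ) : Fin (2 * m) → ℂ := fun i =>
  (-Complex.I) ^ (i : ℕ) *
    (if (i : ℕ) < m - 1 then ((ur (i : ℕ) lam : ℝ) : ℂ)
     else if (i : ℕ) ≤ m then ((1 + Complex.I) / 2) * ((ur ((m : ℤ) - 1) lam : ℝ) : ℂ)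
     else ((ur (2 * (m : ℤ) - 1 - (i : ℕ)) lam : ℝ) : ℂ))

/-- `lam` is the largest (real) eigenvalue of the Hermitian matrix `M`. -/
def IsLargestEigen {ι : Type*} [Fintype ι] (M : Matrix ι ι ℂ) (lam : ℝ) : Prop :=
  (∃ v : ι → ℂ, v ≠ 0 ∧ M.mulVec v = (lam : ℂ) • v) ∧
  ∀ μ : ℝ, (∃ v : ι → ℂ, v ≠ 0 ∧ M.mulVec v = (μ : ℂ) • v) → μ ≤ lam


lemma ur_zero (x : ℝ) : ur 0 x = 1 := by simp [ur]
lemma ur_one (x : ℝ) : ur 1 x = 2 * x := by simp [ur]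
lemma ur_negone (x : ℝ) : ur (-1) x = 0 := by simp [ur]
lemma ur_rec (k : ℤ) (x : ℝ) : ur (k + 2) x = 2 * x * ur (k + 1) x - ur k x := by
  simp [ur, Polynomial.Chebyshev.U_add_two]

lemma ur_ge_one {x : ℝ} (hx : 1 ≤ x) : ∀ n : ℕ, 1 ≤ ur n x ∧ ur n x ≤ ur (n + 1) x := by
  intro n
  induction n with
  | zero => constructor <;> simp [ur_zero, ur_one] <;> linarith
  | succ n ih =>
    obtain ⟨h1, h2⟩ := ih
    have hr := ur_rec (n : ℤ) x
    push_cast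
    constructor
    · linarith
    · rw [show ((n : ℤ) + 1 + 1 : ℤ) = (n : ℤ) + 2 by ring, hr]
      nlinarith

lemma ur_double {x : ℝ} (hx : 3/2 ≤ x) : ∀ n : ℕ, 1 ≤ ur n x ∧ 2 * ur n x ≤ ur (n + 1) x := by
  intro n
  induction n with
  | zero => constructor <;> simp [ur_zero, ur_one] <;> linarith
  | succ n ih =>
    obtain ⟨h1, h2⟩ := ih
    have hr := ur_rec (n : ℤ) x
    push_cast
    constructor
    · linarith
    · rw [show ((n : ℤ) + 1 + 1 : ℤ) = (n : ℤ) + 2 by ring, hr]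
      nlinarith

lemma ur_at_one : ∀ n : ℕ, ur n 1 = n + 1 := by
  intro n
  induction n using Nat.twoStepInduction with
  | zero => simp [ur_zero]
  | one => rw [show ((1 : ℕ) : ℤ) = 1 by norm_num, ur_one]; norm_num
  | more n ih1 ih2 =>
    push_cast
    rw [show ((n : ℤ) + 2 : ℤ) = (n : ℤ) + 2 by ring, ur_rec]
    have e1 : ((n : ℤ) + 1) = ((n + 1 : ℕ) : ℤ) := by push_cast; ring
    rw [e1, ih2, ih1]
    push_cast; ring

section Proots
variable {m : ℕ} (hm : 2 ≤ m)

lemma cast_ur_idx (a : ℕ) (b : ℤ) (h : (a : ℤ) = b) (x : ℝ) : ur a x = ur b x := by rw [h]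

lemma P_pos_of_ge {x : ℝ} (hm : 2 ≤ m) (hx : 3/2 ≤ x) :
    0 < ur (m : ℤ) x - ur ((m : ℤ) - 1) x - ur ((m : ℤ) - 2) x := by
  obtain ⟨a, rfl⟩ : ∃ a, m = a + 2 := ⟨m - 2, by omega⟩
  have e0 : ((a + 2 : ℕ) : ℤ) - 2 = (a : ℤ) := by push_cast; ring
  have e1 : ((a + 2 : ℕ) : ℤ) - 1 = ((a + 1 : ℕ) : ℤ) := by push_cast; ring
  have e2 : ((a + 2 : ℕ) : ℤ) = ((a + 2 : ℕ) : ℤ) := rfl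
  rw [e0, e1]
  have h0 := ur_double hx a
  have h1 := ur_double hx (a + 1)
  push_cast at h1 ⊢
  rw [show ((a:ℤ) + 1 + 1) = (a:ℤ) + 2 by ring] at h1
  nlinarith [h0.1, h0.2, h1.1, h1.2]

lemma P_at_one (hm : 2 ≤ m) :
    ur (m : ℤ) 1 - ur ((m : ℤ) - 1) 1 - ur ((m : ℤ) - 2) 1 = 2 - m := by
  obtain ⟨a, rfl⟩ : ∃ a, m = a + 2 := ⟨m - 2, by omega⟩
  have e0 : ((a + 2 : ℕ) : ℤ) - 2 = ((a : ℕ) : ℤ) := by push_cast; ring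
  have e1 : ((a + 2 : ℕ) : ℤ) - 1 = ((a + 1 : ℕ) : ℤ) := by push_cast; ring
  rw [e0, e1, ur_at_one, ur_at_one, ur_at_one]
  push_cast; ring

lemma P_continuous :
    Continuous (fun x : ℝ => ur (m : ℤ) x - ur ((m : ℤ) - 1) x - ur ((m : ℤ) - 2) x) := by
  unfold ur
  exact ((Polynomial.continuous _).sub (Polynomial.continuous _)).sub (Polynomial.continuous _)

end Proots

section MaxRoot
variable {m : ℕ} {lam : ℝ}

lemma lam_ge_one (hm : 2 ≤ m)
    (hmax : ∀ x : ℝ,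
        ur (m : ℤ) x - ur ((m : ℤ) - 1) x - ur ((m : ℤ) - 2) x = 0 → x ≤ lam) :
    1 ≤ lam := by
  set f := fun x : ℝ => ur (m : ℤ) x - ur ((m : ℤ) - 1) x - ur ((m : ℤ) - 2) x with hf
  have hc : ContinuousOn f (Set.Icc (1 : ℝ) (3/2)) := P_continuous.continuousOn
  have h1 : f 1 ≤ 0 := by
    show ur (m : ℤ) 1 - ur ((m : ℤ) - 1) 1 - ur ((m : ℤ) - 2) 1 ≤ 0
    rw [P_at_one hm]
    have : (2:ℝ) ≤ (m:ℝ) := by exact_mod_cast hm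
    linarith
  have h2 : 0 < f (3/2) := P_pos_of_ge hm le_rfl
  have := intermediate_value_Icc (by norm_num : (1:ℝ) ≤ 3/2) hc
  have h0 : (0:ℝ) ∈ Set.Icc (f 1) (f (3/2)) := ⟨h1, le_of_lt h2⟩
  obtain ⟨c, hc1, hc2⟩ := this h0
  have := hmax c hc2
  linarith [hc1.1]

lemma P_pos_of_gt (hm : 2 ≤ m)
    (hmax : ∀ x : ℝ,
        ur (m : ℤ) x - ur ((m : ℤ) - 1) x - ur ((m : ℤ) - 2) x = 0 → x ≤ lam)
    {μ : ℝ} (hμ : lam < μ) :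
    0 < ur (m : ℤ) μ - ur ((m : ℤ) - 1) μ - ur ((m : ℤ) - 2) μ := by
  set f := fun x : ℝ => ur (m : ℤ) x - ur ((m : ℤ) - 1) x - ur ((m : ℤ) - 2) x with hf
  by_cases h32 : 3/2 ≤ μ
  · exact P_pos_of_ge hm h32
  push_neg at h32
  rcases lt_trichotomy (f μ) 0 with hneg | hzero | hpos
  · exfalso
    have hc : ContinuousOn f (Set.Icc μ (3/2)) := P_continuous.continuousOn
    have h2 : 0 < f (3/2) := P_pos_of_ge hm le_rfl
    obtain ⟨c, hc1, hc2⟩ := intermediate_value_Icc (le_of_lt h32) hc ⟨le_of_lt hneg, le_of_lt h2⟩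
    have := hmax c hc2
    linarith [hc1.1]
  · exfalso; have := hmax μ hzero; linarith
  · exact hpos

lemma mu_le_lam (hm : 2 ≤ m)
    (hmax : ∀ x : ℝ,
        ur (m : ℤ) x - ur ((m : ℤ) - 1) x - ur ((m : ℤ) - 2) x = 0 → x ≤ lam)
    {μ : ℝ}
    (hPQ : (ur (m : ℤ) μ - ur ((m : ℤ) - 1) μ - ur ((m : ℤ) - 2) μ) *
      (ur (m : ℤ) μ + ur ((m : ℤ) - 1) μ - ur ((m : ℤ) - 2) μ) = 0) :
    μ ≤ lam := by
  rcases mul_eq_zero.mp hPQ with hP | hQ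
  · exact hmax μ hP
  · by_contra hlt
    push_neg at hlt
    have hPpos := P_pos_of_gt hm hmax hlt
    have h1 : 1 ≤ lam := lam_ge_one hm hmax
    have hμ1 : (1:ℝ) ≤ μ := by linarith
    -- ur (m-1) μ ≥ 0
    have hmono := ur_ge_one hμ1 (m - 1)
    have e1 : ((m - 1 : ℕ) : ℤ) = (m : ℤ) - 1 := by omega
    rw [e1] at hmono
    nlinarith [hmono.1]

/-- extension of a vector on `Fin n` by zero -/
noncomputable def vvext {n : ℕ} (v : Fin n → ℂ) (k : ℕ) : ℂ :=
  if h : k < n then v ⟨k, h⟩ else 0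

lemma sum_ite_nat {n : ℕ} (c : ℕ) (f : Fin n → ℂ) :
    (∑ j : Fin n, if (j : ℕ) = c then f j else 0) = if h : c < n then f ⟨c, h⟩ else 0 := by
  rcases lt_or_ge c n with h | h
  · rw [dif_pos h]
    rw [Finset.sum_eq_single (⟨c, h⟩ : Fin n)]
    · rw [if_pos rfl]
    · intro j _ hj
      rw [if_neg]
      intro hc
      exact hj (Fin.ext hc)
    · intro hc; exact absurd (Finset.mem_univ _) hc
  · rw [dif_neg (by omega)]
    apply Finset.sum_eq_zero
    intro j _
    rw [if_neg]
    have := j.isLt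
    omega

lemma hmat_mulVec (m : ℕ) (hm : 2 ≤ m) (θ : ℝ) (v : Fin (2 * m) → ℂ) (i : Fin (2 * m)) :
    (Hmat (C2m m) θ).mulVec v i =
      (Complex.exp (-(θ : ℂ) * Complex.I) / 2) * (vvext v ((i : ℕ) + 1)
          + (if (i : ℕ) = m - 2 then vvext v m else 0)
          - (if (i : ℕ) = m - 1 then vvext v (m + 1) else 0))
      + (Complex.exp ((θ : ℂ) * Complex.I) / 2) * ((if 1 ≤ (i : ℕ) then vvext v ((i : ℕ) - 1) else 0)
          + (if (i : ℕ) = m then vvext v (m - 2) else 0)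
          - (if (i : ℕ) = m + 1 then vvext v (m - 1) else 0)) := by
  classical
  set e1 := Complex.exp (-(θ : ℂ) * Complex.I)
  set e2 := Complex.exp ((θ : ℂ) * Complex.I)
  have expand : ∀ j : Fin (2 * m), (Hmat (C2m m) θ) i j * v j
      = (e1 / 2) * ((if (j : ℕ) = (i : ℕ) + 1 then v j else 0)
          + (if (i : ℕ) = m - 2 then (if (j : ℕ) = m then v j else 0) else 0)
          - (if (i : ℕ) = m - 1 then (if (j : ℕ) = m + 1 then v j else 0) else 0))
      + (e2 / 2) * ((if (i : ℕ) = (j : ℕ) + 1 then v j else 0)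
          + (if (i : ℕ) = m then (if (j : ℕ) = m - 2 then v j else 0) else 0)
          - (if (i : ℕ) = m + 1 then (if (j : ℕ) = m - 1 then v j else 0) else 0)) := by
    intro j
    simp only [Hmat, C2m, Matrix.smul_apply, Matrix.add_apply, Matrix.conjTranspose_apply,
      smul_eq_mul]
    rw [star_sub, star_add]
    simp only [apply_ite (star : ℂ → ℂ), star_one, star_zero, ite_and]
    split_ifs <;> ring
  unfold Matrix.mulVec dotProduct
  rw [Finset.sum_congr rfl (fun j _ => expand j)]
  rw [Finset.sum_add_distrib, ← Finset.mul_sum, ← Finset.mul_sum]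
  congr 1
  · congr 1
    rw [Finset.sum_sub_distrib, Finset.sum_add_distrib]
    congr 1
    · congr 1
      · rw [sum_ite_nat ((i : ℕ) + 1) v]
        try rfl
      · rw [Finset.sum_ite_irrel, Finset.sum_const_zero, sum_ite_nat m v]
        congr 1
    · rw [Finset.sum_ite_irrel, Finset.sum_const_zero, sum_ite_nat (m + 1) v]
      congr 1
  · congr 1
    rw [Finset.sum_sub_distrib, Finset.sum_add_distrib]
    congr 1
    · congr 1
      · -- left neighbor
        have : ∀ j : Fin (2 * m), (if (i : ℕ) = (j : ℕ) + 1 then v j else 0)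
            = (if 1 ≤ (i : ℕ) then (if (j : ℕ) = (i : ℕ) - 1 then v j else 0) else 0) := by
          intro j
          split_ifs with h1 h2 h3 <;> first | rfl | omega
        rw [Finset.sum_congr rfl (fun j _ => this j), Finset.sum_ite_irrel,
          Finset.sum_const_zero, sum_ite_nat ((i : ℕ) - 1) v]
        congr 1
      · rw [Finset.sum_ite_irrel, Finset.sum_const_zero, sum_ite_nat (m - 2) v]
        congr 1
    · rw [Finset.sum_ite_irrel, Finset.sum_const_zero, sum_ite_nat (m - 1) v]
      congr 1

noncomputable def wv (m : ℕ) (lam : ℝ) (σ τ : ℂ) : ℕ → ℂ := fun k =>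
  if k < m - 1 then ((ur (k : ℕ) lam : ℝ) : ℂ)
  else if k ≤ m then σ * ((ur ((m : ℤ) - 1) lam : ℝ) : ℂ)
  else τ * ((ur (2 * (m : ℤ) - 1 - (k : ℕ)) lam : ℝ) : ℂ)

lemma wv_lt {m : ℕ} {lam : ℝ} {σ τ : ℂ} {k : ℕ} (h : k < m - 1) :
    wv m lam σ τ k = ((ur (k : ℕ) lam : ℝ) : ℂ) := by unfold wv; rw [if_pos h]

lemma wv_mid {m : ℕ} {lam : ℝ} {σ τ : ℂ} {k : ℕ} (h1 : ¬ k < m - 1) (h2 : k ≤ m) :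
    wv m lam σ τ k = σ * ((ur ((m : ℤ) - 1) lam : ℝ) : ℂ) := by
  unfold wv; rw [if_neg h1, if_pos h2]

lemma wv_hi {m : ℕ} {lam : ℝ} {σ τ : ℂ} {k : ℕ} (h1 : ¬ k < m - 1) (h2 : ¬ k ≤ m) :
    wv m lam σ τ k = τ * ((ur (2 * (m : ℤ) - 1 - (k : ℕ)) lam : ℝ) : ℂ) := by
  unfold wv; rw [if_neg h1, if_neg h2]

lemma ur_congr (a b : ℤ) (h : a = b) (x : ℝ) : ur a x = ur b x := by rw [h]

lemma exp_conj_eta (θ : ℝ) :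
    Complex.exp (-(θ : ℂ) * Complex.I) = starRingEnd ℂ (Complex.exp ((θ : ℂ) * Complex.I)) := by
  rw [← Complex.exp_conj]
  congr 1
  simp [_root_.map_mul, Complex.conj_ofReal, Complex.conj_I]

lemma eta_mul_conj (θ : ℝ) :
    Complex.exp ((θ : ℂ) * Complex.I) * starRingEnd ℂ (Complex.exp ((θ : ℂ) * Complex.I)) = 1 := by
  rw [← exp_conj_eta, ← Complex.exp_add,
    show (θ : ℂ) * Complex.I + -(θ : ℂ) * Complex.I = 0 by ring, Complex.exp_zero]
lemma master (m : ℕ) (hm : 2 ≤ m) (lam : ℝ)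
    (hroot : ur (m : ℤ) lam - ur ((m : ℤ) - 1) lam - ur ((m : ℤ) - 2) lam = 0)
    (θ : ℝ) (σ τ : ℂ)
    (h1 : σ * (1 + Complex.exp ((θ : ℂ) * Complex.I)) = 1)
    (h2 : 1 - Complex.exp ((θ : ℂ) * Complex.I) * τ = 2 * σ)
    (h3 : τ + starRingEnd ℂ (Complex.exp ((θ : ℂ) * Complex.I)) = 2 * σ)
    (h4 : σ * (1 - starRingEnd ℂ (Complex.exp ((θ : ℂ) * Complex.I))) = τ)
    (v : Fin (2 * m) → ℂ)
    (hv : ∀ i : Fin (2 * m),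
      v i = (Complex.exp ((θ : ℂ) * Complex.I)) ^ (i : ℕ) * wv m lam σ τ (i : ℕ)) :
    (Hmat (C2m m) θ).mulVec v = (lam : ℂ) • v := by
  classical
  set η := Complex.exp ((θ : ℂ) * Complex.I) with hηdef
  have hc : η * (starRingEnd ℂ η) = 1 := eta_mul_conj θ
  set η' := starRingEnd ℂ η with hη'def
  have hvv : ∀ kk, kk < 2 * m → vvext v kk = η ^ kk * wv m lam σ τ kk := by
    intro kk h; unfold vvext; rw [dif_pos h]; exact hv ⟨kk, h⟩
  have hvv0 : ∀ kk, 2 * m ≤ kk → vvext v kk = 0 := by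
    intro kk h; unfold vvext; rw [dif_neg (by omega)]
  rcases Nat.lt_or_ge m 3 with hm2 | hm3
  · -- m = 2
    have hm2' : m = 2 := by omega
    subst hm2'
    have hu0 : ((ur ((0:ℕ) : ℤ) lam : ℝ) : ℂ) = 1 := by
      rw [cast_ur_idx 0 0 rfl, ur_zero]; norm_num
    have hu1 : ((ur (((2:ℕ) : ℤ) - 1) lam : ℝ) : ℂ) = 2 * (lam : ℂ) := by
      rw [ur_congr (((2:ℕ):ℤ)-1) 1 (by norm_num), ur_one]; push_cast; ring
    have hu1i : ((ur (1 : ℤ) lam : ℝ) : ℂ) = 2 * (lam : ℂ) := by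
      rw [ur_one]; push_cast; ring
    have hu0i : ((ur (0 : ℤ) lam : ℝ) : ℂ) = 1 := by rw [ur_zero]; norm_num
    have hlam : (2 * (lam:ℂ)) * (2 * (lam:ℂ)) - 1 = 2 * (lam:ℂ) + 1 := by
      have hr2 : ur (2:ℤ) lam = 2 * lam * (2 * lam) - 1 := by
        have := ur_rec 0 lam
        rw [ur_congr (0+2) 2 (by norm_num), ur_congr (0+1) 1 (by norm_num), ur_one, ur_zero] at this
        linarith [this]
      have hro : ur (2:ℤ) lam = 2 * lam + 1 := by
        have h := hroot
        rw [show ((2:ℕ):ℤ) = 2 by norm_num,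
          ur_congr ((2:ℤ)-1) 1 (by norm_num), ur_congr ((2:ℤ)-2) 0 (by norm_num),
          ur_one, ur_zero] at h
        linarith [h]
      have : 2 * lam * (2 * lam) - 1 = 2 * lam + 1 := by rw [← hr2, hro]
      exact_mod_cast this
    funext i
    rw [hmat_mulVec 2 (by norm_num) θ v i, exp_conj_eta θ, ← hηdef, ← hη'def,
      Pi.smul_apply, smul_eq_mul, hv i]
    fin_cases i
    · -- row 0 = m-2
      show (η'/2) * (vvext v (0+1) + (if (0:ℕ) = 2-2 then vvext v 2 else 0)
            - (if (0:ℕ) = 2-1 then vvext v (2+1) else 0))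
          + (η/2) * ((if 1 ≤ (0:ℕ) then vvext v (0-1) else 0)
            + (if (0:ℕ) = 2 then vvext v (2-2) else 0)
            - (if (0:ℕ) = 2+1 then vvext v (2-1) else 0))
          = (lam:ℂ) * (η ^ (0:ℕ) * wv 2 lam σ τ 0)
      rw [if_pos (by norm_num : (0:ℕ) = 2-2), if_neg (by norm_num : ¬ (0:ℕ) = 2-1),
        if_neg (by norm_num : ¬ 1 ≤ (0:ℕ)), if_neg (by norm_num : ¬ (0:ℕ) = 2),
        if_neg (by norm_num : ¬ (0:ℕ) = 2+1)]
      rw [hvv (0+1) (by norm_num), hvv 2 (by norm_num)]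
      rw [wv_lt (show (0:ℕ) < 2-1 by norm_num),
        wv_mid (show ¬ (0+1 : ℕ) < 2-1 by norm_num) (show (0+1:ℕ) ≤ 2 by norm_num),
        wv_mid (show ¬ (2 : ℕ) < 2-1 by norm_num) (show (2:ℕ) ≤ 2 by norm_num)]
      push_cast
      try rw [hu0i]
      try rw [hu1i]
      linear_combination (σ*(lam:ℂ)*(1+η))*hc + (lam:ℂ)*h1
    · -- row 1 = m-1
      show (η'/2) * (vvext v (1+1) + (if (1:ℕ) = 2-2 then vvext v 2 else 0)
            - (if (1:ℕ) = 2-1 then vvext v (2+1) else 0))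
          + (η/2) * ((if 1 ≤ (1:ℕ) then vvext v (1-1) else 0)
            + (if (1:ℕ) = 2 then vvext v (2-2) else 0)
            - (if (1:ℕ) = 2+1 then vvext v (2-1) else 0))
          = (lam:ℂ) * (η ^ (1:ℕ) * wv 2 lam σ τ 1)
      rw [if_neg (by norm_num : ¬ (1:ℕ) = 2-2), if_pos (by norm_num : (1:ℕ) = 2-1),
        if_pos (by norm_num : 1 ≤ (1:ℕ)), if_neg (by norm_num : ¬ (1:ℕ) = 2),
        if_neg (by norm_num : ¬ (1:ℕ) = 2+1)]
      rw [hvv (1+1) (by norm_num), hvv (2+1) (by norm_num), hvv (1-1) (by norm_num)]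
      rw [wv_mid (show ¬ (1 : ℕ) < 2-1 by norm_num) (show (1:ℕ) ≤ 2 by norm_num),
        wv_mid (show ¬ (1+1 : ℕ) < 2-1 by norm_num) (show (1+1:ℕ) ≤ 2 by norm_num),
        wv_hi (show ¬ (2+1 : ℕ) < 2-1 by norm_num) (show ¬ (2+1:ℕ) ≤ 2 by norm_num),
        wv_lt (show (1-1:ℕ) < 2-1 by norm_num)]
      push_cast
      try rw [hu0i]
      try rw [hu1i]
      linear_combination (η*σ*(2*(lam:ℂ))/2 - η^2*τ/2)*hc + (η/2)*h2 - (η*σ/2)*hlam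
    · -- row 2 = m
      show (η'/2) * (vvext v (2+1) + (if (2:ℕ) = 2-2 then vvext v 2 else 0)
            - (if (2:ℕ) = 2-1 then vvext v (2+1) else 0))
          + (η/2) * ((if 1 ≤ (2:ℕ) then vvext v (2-1) else 0)
            + (if (2:ℕ) = 2 then vvext v (2-2) else 0)
            - (if (2:ℕ) = 2+1 then vvext v (2-1) else 0))
          = (lam:ℂ) * (η ^ (2:ℕ) * wv 2 lam σ τ 2)
      rw [if_neg (by norm_num : ¬ (2:ℕ) = 2-2), if_neg (by norm_num : ¬ (2:ℕ) = 2-1),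
        if_pos (by norm_num : 1 ≤ (2:ℕ)), if_pos (by norm_num : (2:ℕ) = 2),
        if_neg (by norm_num : ¬ (2:ℕ) = 2+1)]
      rw [hvv (2+1) (by norm_num), hvv (2-1) (by norm_num), hvv (2-2) (by norm_num)]
      rw [wv_mid (show ¬ (2 : ℕ) < 2-1 by norm_num) (show (2:ℕ) ≤ 2 by norm_num),
        wv_hi (show ¬ (2+1 : ℕ) < 2-1 by norm_num) (show ¬ (2+1:ℕ) ≤ 2 by norm_num),
        wv_mid (show ¬ (2-1 : ℕ) < 2-1 by norm_num) (show (2-1:ℕ) ≤ 2 by norm_num),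
        wv_lt (show (2-2:ℕ) < 2-1 by norm_num)]
      push_cast
      try rw [hu0i]
      try rw [hu1i]
      linear_combination (η^2*τ/2 - η/2)*hc + (η^2/2)*h3 - (η^2*σ/2)*hlam
    · -- row 3 = m+1
      show (η'/2) * (vvext v (3+1) + (if (3:ℕ) = 2-2 then vvext v 2 else 0)
            - (if (3:ℕ) = 2-1 then vvext v (2+1) else 0))
          + (η/2) * ((if 1 ≤ (3:ℕ) then vvext v (3-1) else 0)
            + (if (3:ℕ) = 2 then vvext v (2-2) else 0)
            - (if (3:ℕ) = 2+1 then vvext v (2-1) else 0))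
          = (lam:ℂ) * (η ^ (3:ℕ) * wv 2 lam σ τ 3)
      rw [if_neg (by norm_num : ¬ (3:ℕ) = 2-2), if_neg (by norm_num : ¬ (3:ℕ) = 2-1),
        if_pos (by norm_num : 1 ≤ (3:ℕ)), if_neg (by norm_num : ¬ (3:ℕ) = 2),
        if_pos (by norm_num : (3:ℕ) = 2+1)]
      rw [hvv0 (3+1) (by norm_num), hvv (3-1) (by norm_num), hvv (2-1) (by norm_num)]
      rw [wv_hi (show ¬ (3 : ℕ) < 2-1 by norm_num) (show ¬ (3:ℕ) ≤ 2 by norm_num),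
        wv_mid (show ¬ (3-1 : ℕ) < 2-1 by norm_num) (show (3-1:ℕ) ≤ 2 by norm_num),
        wv_mid (show ¬ (2-1 : ℕ) < 2-1 by norm_num) (show (2-1:ℕ) ≤ 2 by norm_num)]
      push_cast
      try rw [hu0i]
      try rw [hu1i]
      linear_combination (η^2*σ*(lam:ℂ))*hc + (η^3*(lam:ℂ))*h4
  · -- m ≥ 3
    obtain ⟨n, rfl⟩ : ∃ n, m = n + 3 := ⟨m - 3, by omega⟩
    -- canonical ur facts over ℂ
    have recA : ((ur ((n:ℤ)+2) lam : ℝ) : ℂ)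
        = 2*(lam:ℂ)*((ur ((n:ℤ)+1) lam : ℝ) : ℂ) - ((ur ((n:ℤ)) lam : ℝ) : ℂ) := by
      exact_mod_cast ur_rec (n : ℤ) lam
    have recB : ((ur ((n:ℤ)+3) lam : ℝ) : ℂ)
        = 2*(lam:ℂ)*((ur ((n:ℤ)+2) lam : ℝ) : ℂ) - ((ur ((n:ℤ)+1) lam : ℝ) : ℂ) := by
      have := ur_rec ((n:ℤ)+1) lam
      rw [ur_congr ((n:ℤ)+1+2) ((n:ℤ)+3) (by ring), ur_congr ((n:ℤ)+1+1) ((n:ℤ)+2) (by ring)] at this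
      exact_mod_cast this
    have hrootC : ((ur ((n:ℤ)+3) lam : ℝ) : ℂ)
        = ((ur ((n:ℤ)+2) lam : ℝ) : ℂ) + ((ur ((n:ℤ)+1) lam : ℝ) : ℂ) := by
      have h := hroot
      rw [cast_ur_idx (n+3) ((n:ℤ)+3) (by push_cast; ring),
        ur_congr (((n+3:ℕ):ℤ)-1) ((n:ℤ)+2) (by push_cast; ring),
        ur_congr (((n+3:ℕ):ℤ)-2) ((n:ℤ)+1) (by push_cast; ring)] at h
      have : ur ((n:ℤ)+3) lam = ur ((n:ℤ)+2) lam + ur ((n:ℤ)+1) lam := by linarith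
      exact_mod_cast this
    -- the middle-region ur value appearing from wv_mid
    have hBmid : ((ur (((n+3:ℕ):ℤ) - 1) lam : ℝ) : ℂ) = ((ur ((n:ℤ)+2) lam : ℝ) : ℂ) := by
      rw [ur_congr (((n+3:ℕ):ℤ)-1) ((n:ℤ)+2) (by push_cast; ring)]
    funext i
    rw [hmat_mulVec (n+3) hm θ v i, exp_conj_eta θ, ← hηdef, ← hη'def,
      Pi.smul_apply, smul_eq_mul, hv i]
    have hilt : (i : ℕ) < 2 * (n + 3) := i.isLt
    rcases (by omega :
        ((i:ℕ) = 0) ∨ (1 ≤ (i:ℕ) ∧ (i:ℕ) ≤ n) ∨ ((i:ℕ) = n+1) ∨ ((i:ℕ) = n+2)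
        ∨ ((i:ℕ) = n+3) ∨ ((i:ℕ) = n+4) ∨ (n+5 ≤ (i:ℕ) ∧ (i:ℕ) ≤ 2*n+4)
        ∨ ((i:ℕ) = 2*n+5)) with
      hk | ⟨hka, hkb⟩ | hk | hk | hk | hk | ⟨hka, hkb⟩ | hk
    · -- row 0
      rw [hk]
      rw [if_neg (by omega : ¬ (0:ℕ) = (n+3)-2), if_neg (by omega : ¬ (0:ℕ) = (n+3)-1),
        if_neg (by omega : ¬ 1 ≤ (0:ℕ)), if_neg (by omega : ¬ (0:ℕ) = n+3),
        if_neg (by omega : ¬ (0:ℕ) = (n+3)+1)]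
      rw [hvv (0+1) (by omega)]
      rw [wv_lt (show (0+1:ℕ) < (n+3)-1 by omega), wv_lt (show (0:ℕ) < (n+3)-1 by omega)]
      rw [cast_ur_idx (0+1) 1 (by norm_num), cast_ur_idx 0 0 (by norm_num), ur_one, ur_zero]
      push_cast
      linear_combination (lam:ℂ)*hc
    · -- generic left row
      obtain ⟨j, hk, hj⟩ : ∃ j, (i:ℕ) = j + 1 ∧ j + 1 ≤ n := ⟨(i:ℕ) - 1, by omega, by omega⟩
      rw [hk]
      rw [if_neg (by omega : ¬ j+1 = (n+3)-2), if_neg (by omega : ¬ j+1 = (n+3)-1),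
        if_pos (by omega : 1 ≤ j+1), if_neg (by omega : ¬ j+1 = n+3),
        if_neg (by omega : ¬ j+1 = (n+3)+1), Nat.add_sub_cancel]
      rw [hvv (j+1+1) (by omega), hvv j (by omega)]
      rw [wv_lt (show (j+1+1:ℕ) < (n+3)-1 by omega), wv_lt (show (j:ℕ) < (n+3)-1 by omega),
        wv_lt (show (j+1:ℕ) < (n+3)-1 by omega)]
      rw [cast_ur_idx (j+1+1) ((j:ℤ)+2) (by push_cast; ring),
        cast_ur_idx (j+1) ((j:ℤ)+1) (by push_cast; ring)]
      have recj : ((ur ((j:ℤ)+2) lam : ℝ) : ℂ)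
          = 2*(lam:ℂ)*((ur ((j:ℤ)+1) lam : ℝ) : ℂ) - ((ur ((j:ℤ)) lam : ℝ) : ℂ) := by
        exact_mod_cast ur_rec (j : ℤ) lam
      linear_combination (η^j*η'*η*η/2) * recj
        + (η^j*((lam:ℂ)*η*((ur ((j:ℤ)+1) lam : ℝ) : ℂ) - η*((ur ((j:ℤ)) lam : ℝ) : ℂ)/2)) * hc
    · -- row m-2 = n+1
      rw [hk]
      rw [if_pos (by omega : (n+1:ℕ) = (n+3)-2), if_neg (by omega : ¬ n+1 = (n+3)-1),
        if_pos (by omega : 1 ≤ n+1), if_neg (by omega : ¬ n+1 = n+3),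
        if_neg (by omega : ¬ n+1 = (n+3)+1), Nat.add_sub_cancel]
      rw [hvv (n+1+1) (by omega), hvv (n+3) (by omega), hvv n (by omega)]
      rw [wv_mid (show ¬ (n+1+1:ℕ) < (n+3)-1 by omega) (show (n+1+1:ℕ) ≤ n+3 by omega),
        wv_mid (show ¬ (n+3:ℕ) < (n+3)-1 by omega) (show (n+3:ℕ) ≤ n+3 by omega),
        wv_lt (show (n:ℕ) < (n+3)-1 by omega), wv_lt (show (n+1:ℕ) < (n+3)-1 by omega)]
      rw [hBmid, cast_ur_idx (n+1) ((n:ℤ)+1) (by push_cast; ring)]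
      linear_combination (η^n*(η*σ*((ur ((n:ℤ)+2) lam : ℝ) : ℂ)*(1+η))/2)*hc
        + (η^n*η*((ur ((n:ℤ)+2) lam : ℝ) : ℂ)/2)*h1
        + (η^n*η/2)*(recA)
    · -- row m-1 = n+2
      rw [hk]
      rw [if_neg (by omega : ¬ (n+2:ℕ) = (n+3)-2), if_pos (by omega : (n+2:ℕ) = (n+3)-1),
        if_pos (by omega : 1 ≤ n+2), if_neg (by omega : ¬ n+2 = n+3),
        if_neg (by omega : ¬ n+2 = (n+3)+1), show (n+2-1 : ℕ) = n+1 from by omega]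
      rw [hvv (n+2+1) (by omega), hvv ((n+3)+1) (by omega), hvv (n+1) (by omega)]
      rw [wv_mid (show ¬ (n+2+1:ℕ) < (n+3)-1 by omega) (show (n+2+1:ℕ) ≤ n+3 by omega),
        wv_hi (show ¬ ((n+3)+1:ℕ) < (n+3)-1 by omega) (show ¬ ((n+3)+1:ℕ) ≤ n+3 by omega),
        wv_lt (show (n+1:ℕ) < (n+3)-1 by omega),
        wv_mid (show ¬ (n+2:ℕ) < (n+3)-1 by omega) (show (n+2:ℕ) ≤ n+3 by omega)]
      rw [hBmid, cast_ur_idx (n+1) ((n:ℤ)+1) (by push_cast; ring),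
        ur_congr (2*((n+3:ℕ):ℤ)-1-(((n+3)+1:ℕ):ℤ)) ((n:ℤ)+1) (by push_cast; ring)]
      linear_combination
        (η^n*(η*η*σ*((ur ((n:ℤ)+2) lam : ℝ) : ℂ)/2 - η*η*η*τ*((ur ((n:ℤ)+1) lam : ℝ) : ℂ)/2))*hc
        + (η^n*η*η*((ur ((n:ℤ)+1) lam : ℝ) : ℂ)/2)*h2
        + (η^n*η*η*σ/2)*recB - (η^n*η*η*σ/2)*(hrootC)
    · -- row m = n+3
      rw [hk]
      rw [if_neg (by omega : ¬ (n+3:ℕ) = (n+3)-2), if_neg (by omega : ¬ (n+3:ℕ) = (n+3)-1),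
        if_pos (by omega : 1 ≤ n+3), if_pos (rfl : (n+3:ℕ) = n+3),
        if_neg (by omega : ¬ n+3 = (n+3)+1), show (n+3-1 : ℕ) = n+2 from by omega,
        show ((n+3)-2 : ℕ) = n+1 from by omega]
      rw [hvv (n+3+1) (by omega), hvv (n+1) (by omega), hvv (n+2) (by omega)]
      rw [wv_hi (show ¬ (n+3+1:ℕ) < (n+3)-1 by omega) (show ¬ (n+3+1:ℕ) ≤ n+3 by omega),
        wv_lt (show (n+1:ℕ) < (n+3)-1 by omega),
        wv_mid (show ¬ (n+2:ℕ) < (n+3)-1 by omega) (show (n+2:ℕ) ≤ n+3 by omega),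
        wv_mid (show ¬ (n+3:ℕ) < (n+3)-1 by omega) (show (n+3:ℕ) ≤ n+3 by omega)]
      rw [hBmid, cast_ur_idx (n+1) ((n:ℤ)+1) (by push_cast; ring),
        ur_congr (2*((n+3:ℕ):ℤ)-1-((n+3+1:ℕ):ℤ)) ((n:ℤ)+1) (by push_cast; ring)]
      linear_combination
        (η^n*(η*η*η*τ*((ur ((n:ℤ)+1) lam : ℝ) : ℂ)/2 - η*η*((ur ((n:ℤ)+1) lam : ℝ) : ℂ)/2))*hc
        + (η^n*η*η*η*((ur ((n:ℤ)+1) lam : ℝ) : ℂ)/2)*h3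
        + (η^n*η*η*η*σ/2)*recB - (η^n*η*η*η*σ/2)*(hrootC)
    · -- row m+1 = n+4
      rw [hk]
      rw [if_neg (by omega : ¬ (n+4:ℕ) = (n+3)-2), if_neg (by omega : ¬ (n+4:ℕ) = (n+3)-1),
        if_pos (by omega : 1 ≤ n+4), if_neg (by omega : ¬ n+4 = n+3),
        if_pos (by omega : (n+4:ℕ) = (n+3)+1), show (n+4-1 : ℕ) = n+3 from by omega,
        show ((n+3)-1 : ℕ) = n+2 from by omega]
      rw [hvv (n+4+1) (by omega), hvv (n+2) (by omega), hvv (n+3) (by omega)]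
      rw [wv_hi (show ¬ (n+4+1:ℕ) < (n+3)-1 by omega) (show ¬ (n+4+1:ℕ) ≤ n+3 by omega),
        wv_mid (show ¬ (n+2:ℕ) < (n+3)-1 by omega) (show (n+2:ℕ) ≤ n+3 by omega),
        wv_mid (show ¬ (n+3:ℕ) < (n+3)-1 by omega) (show (n+3:ℕ) ≤ n+3 by omega),
        wv_hi (show ¬ (n+4:ℕ) < (n+3)-1 by omega) (show ¬ (n+4:ℕ) ≤ n+3 by omega)]
      rw [hBmid,
        ur_congr (2*((n+3:ℕ):ℤ)-1-((n+4+1:ℕ):ℤ)) ((n:ℤ)) (by push_cast; ring),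
        ur_congr (2*((n+3:ℕ):ℤ)-1-((n+4:ℕ):ℤ)) ((n:ℤ)+1) (by push_cast; ring)]
      linear_combination
        (η^n*η*η*(η*η*τ*((ur ((n:ℤ)) lam : ℝ) : ℂ)/2 + η*σ*((ur ((n:ℤ)+2) lam : ℝ) : ℂ)/2))*hc
        + (η^n*η*η*η*η*((ur ((n:ℤ)+2) lam : ℝ) : ℂ)/2)*h4
        + (η^n*η*η*η*η*τ/2)*recA
    · -- generic right row
      obtain ⟨j, hk, hj1, hj2⟩ : ∃ j, (i:ℕ) = j + 1 ∧ n+4 ≤ j ∧ j ≤ 2*n+3 :=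
        ⟨(i:ℕ) - 1, by omega, by omega, by omega⟩
      rw [hk]
      rw [if_neg (by omega : ¬ j+1 = (n+3)-2), if_neg (by omega : ¬ j+1 = (n+3)-1),
        if_pos (by omega : 1 ≤ j+1), if_neg (by omega : ¬ j+1 = n+3),
        if_neg (by omega : ¬ j+1 = (n+3)+1), Nat.add_sub_cancel]
      rw [hvv (j+1+1) (by omega), hvv j (by omega)]
      rw [wv_hi (show ¬ (j+1+1:ℕ) < (n+3)-1 by omega) (show ¬ (j+1+1:ℕ) ≤ n+3 by omega),
        wv_hi (show ¬ (j:ℕ) < (n+3)-1 by omega) (show ¬ (j:ℕ) ≤ n+3 by omega),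
        wv_hi (show ¬ (j+1:ℕ) < (n+3)-1 by omega) (show ¬ (j+1:ℕ) ≤ n+3 by omega)]
      rw [ur_congr (2*((n+3:ℕ):ℤ)-1-((j+1+1:ℕ):ℤ)) (2*(n:ℤ)+3-(j:ℤ)) (by push_cast; ring),
        ur_congr (2*((n+3:ℕ):ℤ)-1-((j:ℕ):ℤ)) ((2*(n:ℤ)+3-(j:ℤ))+2) (by push_cast; ring),
        ur_congr (2*((n+3:ℕ):ℤ)-1-((j+1:ℕ):ℤ)) ((2*(n:ℤ)+3-(j:ℤ))+1) (by push_cast; ring)]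
      have recj : ((ur ((2*(n:ℤ)+3-(j:ℤ))+2) lam : ℝ) : ℂ)
          = 2*(lam:ℂ)*((ur ((2*(n:ℤ)+3-(j:ℤ))+1) lam : ℝ) : ℂ)
            - ((ur (2*(n:ℤ)+3-(j:ℤ)) lam : ℝ) : ℂ) := by
        exact_mod_cast ur_rec (2*(n:ℤ)+3-(j:ℤ)) lam
      linear_combination (η^j*η*τ*((ur (2*(n:ℤ)+3-(j:ℤ)) lam : ℝ) : ℂ)/2)*hc
        + (η^j*η*τ/2)*recj
    · -- last row 2m-1 = 2n+5
      rw [hk]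
      rw [if_neg (by omega : ¬ (2*n+5:ℕ) = (n+3)-2), if_neg (by omega : ¬ (2*n+5:ℕ) = (n+3)-1),
        if_pos (by omega : 1 ≤ 2*n+5), if_neg (by omega : ¬ 2*n+5 = n+3),
        if_neg (by omega : ¬ 2*n+5 = (n+3)+1)]
      rw [hvv0 (2*n+5+1) (by omega), hvv (2*n+5-1) (by omega)]
      rw [show (2*n+5-1 : ℕ) = 2*n+4 by omega]
      rw [wv_hi (show ¬ (2*n+4:ℕ) < (n+3)-1 by omega) (show ¬ (2*n+4:ℕ) ≤ n+3 by omega),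
        wv_hi (show ¬ (2*n+5:ℕ) < (n+3)-1 by omega) (show ¬ (2*n+5:ℕ) ≤ n+3 by omega)]
      rw [ur_congr (2*((n+3:ℕ):ℤ)-1-((2*n+4:ℕ):ℤ)) 1 (by push_cast; ring),
        ur_congr (2*((n+3:ℕ):ℤ)-1-((2*n+5:ℕ):ℤ)) 0 (by push_cast; ring), ur_one, ur_zero]
      push_cast
      ring

lemma algebra_key (η η' μ B A2 E M s t b c : ℂ) (hc : η * η' = 1)
    (S1 : b + E*s + η*c = 2*μ*(A2*s))
    (S2 : c + A2*s - η*(A2*t) = 2*μ*b)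
    (S3 : A2*t + b + η'*(A2*s) = 2*μ*c)
    (S4 : E*t + c - η'*b = 2*μ*(A2*t))
    (recA : B = 2*μ*A2 - E) (recB : M = 2*μ*B - A2) :
    ((M - B - A2)*(M + B - A2))*s = 0 ∧ ((M - B - A2)*(M + B - A2))*t = 0 ∧
    2*b = B*(s - η*t) ∧ 2*c = B*(t + η'*s) := by
  have hb : 2*b = B*(s - η*t) := by
    linear_combination S1 - η*S4 - (s - η*t)*recA - b*hc
  have hcc : 2*c = B*(t + η'*s) := by
    linear_combination η'*S1 + S4 - (t + η'*s)*recA - c*hc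
  have eq2 : (B*η' - (M - A2))*s + (B + η*(M - A2))*t = 0 := by
    linear_combination 2*S2 - (s - η*t)*recB + 2*μ*hb - hcc
  have eq3 : (B - η'*(M - A2))*s - ((M - A2) + B*η)*t = 0 := by
    linear_combination 2*S3 - (t + η'*s)*recB + 2*μ*hcc - hb
  refine ⟨?_, ?_, hb, hcc⟩
  · linear_combination (-((M-A2) + B*η)/2)*eq2 - ((B + η*(M-A2))/2)*eq3
      + ((B*B - (M-A2)*(M-A2))*s/2)*hc
  · linear_combination (-(B - η'*(M-A2))/2)*eq2 + ((B*η' - (M-A2))/2)*eq3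
      + ((B*B - (M-A2)*(M-A2))*t/2)*hc

lemma key (m : ℕ) (hm : 2 ≤ m) (θ μ : ℝ) (v : Fin (2*m) → ℂ) (hv0 : v ≠ 0)
    (hv : (Hmat (C2m m) θ).mulVec v = (μ:ℂ) • v) :
    (ur (m:ℤ) μ - ur ((m:ℤ)-1) μ - ur ((m:ℤ)-2) μ)
      * (ur (m:ℤ) μ + ur ((m:ℤ)-1) μ - ur ((m:ℤ)-2) μ) = 0 := by
  classical
  set η := Complex.exp ((θ:ℂ)*Complex.I) with hηdef
  have hc : η * (starRingEnd ℂ η) = 1 := eta_mul_conj θ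
  set η' := starRingEnd ℂ η with hη'def
  have hηne : η ≠ 0 := left_ne_zero_of_mul_eq_one hc
  set u : ℕ → ℂ := fun k => η' ^ k * vvext v k with hudef
  have hvu : ∀ k, vvext v k = η ^ k * u k := by
    intro k
    show vvext v k = η ^ k * (η' ^ k * vvext v k)
    rw [← mul_assoc, ← mul_pow, hc, one_pow, one_mul]
  have hvz : ∀ kk, 2*m ≤ kk → vvext v kk = 0 := by
    intro kk h; unfold vvext; rw [dif_neg (by omega)]
  have row : ∀ k, k < 2*m → (η'/2) * (vvext v (k+1)
        + (if k = m-2 then vvext v m else 0) - (if k = m-1 then vvext v (m+1) else 0))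
      + (η/2) * ((if 1 ≤ k then vvext v (k-1) else 0)
        + (if k = m then vvext v (m-2) else 0) - (if k = m+1 then vvext v (m-1) else 0))
      = (μ:ℂ) * vvext v k := by
    intro k hk
    have h2 := congrFun hv ⟨k, hk⟩
    rw [hmat_mulVec m hm θ v ⟨k, hk⟩, exp_conj_eta θ, Pi.smul_apply, smul_eq_mul] at h2
    rw [show vvext v k = v ⟨k, hk⟩ from by unfold vvext; rw [dif_pos hk]]
    exact h2
  have rowGen : ∀ j, j + 2 < 2*m → ¬(j+1 = m-2) → ¬(j+1 = m-1) → ¬(j+1 = m) → ¬(j+1 = m+1) →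
      u (j+1+1) + u j = 2*(μ:ℂ) * u (j+1) := by
    intro j hj h2 h3 h4 h5
    have hr := row (j+1) (by omega)
    rw [if_neg h2, if_neg h3, if_neg h4, if_neg h5, if_pos (by omega : 1 ≤ j+1),
      Nat.add_sub_cancel] at hr
    rw [hvu (j+1+1), hvu j, hvu (j+1)] at hr
    apply mul_left_cancel₀ (pow_ne_zero (j+1) hηne)
    linear_combination 2*hr - (η^(j+1) * u (j+1+1)) * hc
  rcases Nat.lt_or_ge m 3 with hm2 | hm3
  · -- m = 2
    have hm2' : m = 2 := by omega
    subst hm2'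
    have hE : ((ur (-1:ℤ) μ : ℝ):ℂ) = 0 := by rw [ur_negone]; norm_num
    have hA : ((ur (0:ℤ) μ : ℝ):ℂ) = 1 := by rw [ur_zero]; norm_num
    have hB : ((ur (1:ℤ) μ : ℝ):ℂ) = 2*(μ:ℂ) := by rw [ur_one]; push_cast; ring
    have recA : ((ur (1:ℤ) μ : ℝ):ℂ) = 2*(μ:ℂ)*((ur (0:ℤ) μ : ℝ):ℂ) - ((ur (-1:ℤ) μ : ℝ):ℂ) := by
      have := ur_rec (-1) μ
      rw [ur_congr (-1+2) 1 (by ring), ur_congr (-1+1) 0 (by ring)] at this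
      exact_mod_cast this
    have recB : ((ur (2:ℤ) μ : ℝ):ℂ) = 2*(μ:ℂ)*((ur (1:ℤ) μ : ℝ):ℂ) - ((ur (0:ℤ) μ : ℝ):ℂ) := by
      have := ur_rec 0 μ
      rw [ur_congr (0+2) 2 (by ring), ur_congr (0+1) 1 (by ring)] at this
      exact_mod_cast this
    have S1 : u 1 + ((ur (-1:ℤ) μ : ℝ):ℂ) * u 0 + η * u 2 = 2*(μ:ℂ)*(((ur (0:ℤ) μ : ℝ):ℂ) * u 0) := by
      have hr := row 0 (by omega)
      rw [if_pos (by norm_num : (0:ℕ) = 2-2), if_neg (by norm_num : ¬ (0:ℕ) = 2-1),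
        if_neg (by norm_num : ¬ 1 ≤ (0:ℕ)), if_neg (by norm_num : ¬ (0:ℕ) = 2),
        if_neg (by norm_num : ¬ (0:ℕ) = 2+1)] at hr
      rw [hvu (0+1), hvu 2, hvu 0] at hr
      rw [hE, hA]
      linear_combination 2*hr - (u 1 + η * u 2)*hc
    have S2 : u 2 + ((ur (0:ℤ) μ : ℝ):ℂ) * u 0 - η*(((ur (0:ℤ) μ : ℝ):ℂ) * u 3)
        = 2*(μ:ℂ)*(u 1) := by
      have hr := row 1 (by omega)
      rw [if_neg (by norm_num : ¬ (1:ℕ) = 2-2), if_pos (by norm_num : (1:ℕ) = 2-1),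
        if_pos (by norm_num : 1 ≤ (1:ℕ)), if_neg (by norm_num : ¬ (1:ℕ) = 2),
        if_neg (by norm_num : ¬ (1:ℕ) = 2+1)] at hr
      rw [hvu (1+1), hvu (2+1), hvu (1-1), hvu 1] at hr
      rw [hA]
      apply mul_left_cancel₀ hηne
      linear_combination 2*hr - (η * u 2 - η^2 * u 3)*hc
    have S3 : ((ur (0:ℤ) μ : ℝ):ℂ) * u 3 + u 1 + η'*(((ur (0:ℤ) μ : ℝ):ℂ) * u 0)
        = 2*(μ:ℂ)*(u 2) := by
      have hr := row 2 (by omega)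
      rw [if_neg (by norm_num : ¬ (2:ℕ) = 2-2), if_neg (by norm_num : ¬ (2:ℕ) = 2-1),
        if_pos (by norm_num : 1 ≤ (2:ℕ)), if_pos (by norm_num : (2:ℕ) = 2),
        if_neg (by norm_num : ¬ (2:ℕ) = 2+1)] at hr
      rw [hvu (2+1), hvu (2-1), hvu (2-2), hvu 2] at hr
      rw [hA]
      apply mul_left_cancel₀ (pow_ne_zero 2 hηne)
      linear_combination 2*hr + (η * u 0 - η^2 * u 3)*hc
    have S4 : ((ur (-1:ℤ) μ : ℝ):ℂ) * u 3 + u 2 - η'* u 1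
        = 2*(μ:ℂ)*(((ur (0:ℤ) μ : ℝ):ℂ) * u 3) := by
      have hr := row 3 (by omega)
      rw [if_neg (by norm_num : ¬ (3:ℕ) = 2-2), if_neg (by norm_num : ¬ (3:ℕ) = 2-1),
        if_pos (by norm_num : 1 ≤ (3:ℕ)), if_neg (by norm_num : ¬ (3:ℕ) = 2),
        if_pos (by norm_num : (3:ℕ) = 2+1)] at hr
      rw [hvz (3+1) (by norm_num)] at hr
      rw [hvu (3-1), hvu (2-1), hvu 3] at hr
      rw [hE, hA]
      apply mul_left_cancel₀ (pow_ne_zero 3 hηne)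
      linear_combination 2*hr - (η^2 * u 1)*hc
    obtain ⟨hPs, hPt, hb2, hc2⟩ := algebra_key η η' (μ:ℂ)
      ((ur (1:ℤ) μ : ℝ):ℂ) ((ur (0:ℤ) μ : ℝ):ℂ) ((ur (-1:ℤ) μ : ℝ):ℂ) ((ur (2:ℤ) μ : ℝ):ℂ)
      (u 0) (u 3) (u 1) (u 2) hc S1 S2 S3 S4 recA recB
    rw [cast_ur_idx 2 2 (by norm_num), ur_congr (((2:ℕ):ℤ)-1) 1 (by norm_num),
      ur_congr (((2:ℕ):ℤ)-2) 0 (by norm_num)]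
    by_contra hne
    have hCne : (((ur (2:ℤ) μ - ur (1:ℤ) μ - ur (0:ℤ) μ)
        * (ur (2:ℤ) μ + ur (1:ℤ) μ - ur (0:ℤ) μ) : ℝ) : ℂ) ≠ 0 := by
      exact_mod_cast hne
    have hfac : (((ur (2:ℤ) μ : ℝ):ℂ) - ((ur (1:ℤ) μ : ℝ):ℂ) - ((ur (0:ℤ) μ : ℝ):ℂ))
        * (((ur (2:ℤ) μ : ℝ):ℂ) + ((ur (1:ℤ) μ : ℝ):ℂ) - ((ur (0:ℤ) μ : ℝ):ℂ)) ≠ 0 := by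
      intro h; apply hCne; push_cast; linear_combination h
    have hs0 : u 0 = 0 := by
      rcases mul_eq_zero.mp hPs with h | h
      · exact absurd h hfac
      · exact h
    have ht0 : u 3 = 0 := by
      rcases mul_eq_zero.mp hPt with h | h
      · exact absurd h hfac
      · exact h
    have hb0 : u 1 = 0 := by
      have := hb2; rw [hs0, ht0] at this
      have h2 : (2:ℂ) * u 1 = 0 := by rw [this]; ring
      simpa using h2
    have hc0 : u 2 = 0 := by
      have := hc2; rw [hs0, ht0] at this
      have h2 : (2:ℂ) * u 2 = 0 := by rw [this]; ring
      simpa using h2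
    apply hv0
    funext ii
    have hii : (ii:ℕ) < 4 := by have := ii.isLt; omega
    have hu : u (ii:ℕ) = 0 := by
      interval_cases h : (ii:ℕ) <;> assumption
    have h1 : vvext v (ii:ℕ) = 0 := by rw [hvu, hu]; ring
    have h2 : vvext v (ii:ℕ) = v ii := by
      unfold vvext; rw [dif_pos ii.isLt]
    rw [← h2, h1]; rfl
  · -- m ≥ 3
    obtain ⟨n, rfl⟩ : ∃ n, m = n + 3 := ⟨m - 3, by omega⟩
    have row0 : u 1 = 2*(μ:ℂ) * u 0 := by
      have hr := row 0 (by omega)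
      rw [if_neg (by omega : ¬ (0:ℕ) = (n+3)-2), if_neg (by omega : ¬ (0:ℕ) = (n+3)-1),
        if_neg (by omega : ¬ 1 ≤ (0:ℕ)), if_neg (by omega : ¬ (0:ℕ) = n+3),
        if_neg (by omega : ¬ (0:ℕ) = (n+3)+1)] at hr
      rw [hvu (0+1), hvu 0] at hr
      linear_combination 2*hr - (u (0+1)) * hc
    have rowLast : u (2*n+4) = 2*(μ:ℂ) * u (2*n+5) := by
      have hr := row (2*n+5) (by omega)
      rw [if_neg (by omega : ¬ (2*n+5:ℕ) = (n+3)-2), if_neg (by omega : ¬ (2*n+5:ℕ) = (n+3)-1),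
        if_pos (by omega : 1 ≤ 2*n+5), if_neg (by omega : ¬ 2*n+5 = n+3),
        if_neg (by omega : ¬ 2*n+5 = (n+3)+1), show (2*n+5-1:ℕ) = 2*n+4 from by omega] at hr
      rw [hvz (2*n+5+1) (by omega), hvu (2*n+4), hvu (2*n+5)] at hr
      apply mul_left_cancel₀ (pow_ne_zero (2*n+5) hηne)
      linear_combination 2*hr
    have claimL : ∀ k, k ≤ n+1 → u k = ((ur (k:ℕ) μ : ℝ):ℂ) * u 0 := by
      intro k
      induction k using Nat.twoStepInduction with
      | zero =>
        intro _
        rw [cast_ur_idx 0 0 (by norm_num), ur_zero]; norm_num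
      | one =>
        intro _
        rw [cast_ur_idx 1 1 (by norm_num), ur_one]
        push_cast
        linear_combination row0
      | more j ih1 ih2 =>
        intro hle
        have e1 := ih1 (by omega)
        have e2 := ih2 (by omega)
        have G := rowGen j (by omega) (by omega) (by omega) (by omega) (by omega)
        have recj : ((ur ((j:ℤ)+2) μ : ℝ):ℂ)
            = 2*(μ:ℂ)*((ur ((j:ℤ)+1) μ : ℝ):ℂ) - ((ur ((j:ℤ)) μ : ℝ):ℂ) := by
          exact_mod_cast ur_rec (j:ℤ) μ
        rw [cast_ur_idx (j+1+1) ((j:ℤ)+2) (by push_cast; ring)]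
        rw [cast_ur_idx (j+1) ((j:ℤ)+1) (by push_cast; ring)] at e2
        linear_combination G - e1 + 2*(μ:ℂ)*e2 - (u 0) * recj
    have claimR : ∀ k, k ≤ n+1 → u (2*n+5-k) = ((ur (k:ℕ) μ : ℝ):ℂ) * u (2*n+5) := by
      intro k
      induction k using Nat.twoStepInduction with
      | zero =>
        intro _
        rw [Nat.sub_zero, cast_ur_idx 0 0 (by norm_num), ur_zero]; norm_num
      | one =>
        intro _
        rw [show (2*n+5-1:ℕ) = 2*n+4 from by omega, cast_ur_idx 1 1 (by norm_num), ur_one]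
        push_cast
        linear_combination rowLast
      | more j ih1 ih2 =>
        intro hle
        have e1 := ih1 (by omega)
        have e2 := ih2 (by omega)
        have G := rowGen (2*n+3-j) (by omega) (by omega) (by omega) (by omega) (by omega)
        have recj : ((ur ((j:ℤ)+2) μ : ℝ):ℂ)
            = 2*(μ:ℂ)*((ur ((j:ℤ)+1) μ : ℝ):ℂ) - ((ur ((j:ℤ)) μ : ℝ):ℂ) := by
          exact_mod_cast ur_rec (j:ℤ) μ
        rw [show (2*n+3-j+1+1:ℕ) = 2*n+5-j from by omega,
          show (2*n+3-j+1:ℕ) = 2*n+5-(j+1) from by omega] at G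
        rw [show (2*n+5-(j+2):ℕ) = 2*n+3-j from by omega,
          cast_ur_idx (j+2) ((j:ℤ)+2) (by push_cast; ring)]
        rw [cast_ur_idx (j+1) ((j:ℤ)+1) (by push_cast; ring)] at e2
        linear_combination G - e1 + 2*(μ:ℂ)*e2 - (u (2*n+5)) * recj
    -- canonical values
    have hun : u n = ((ur ((n:ℤ)) μ : ℝ):ℂ) * u 0 := claimL n (by omega)
    have hun1 : u (n+1) = ((ur ((n:ℤ)+1) μ : ℝ):ℂ) * u 0 := by
      have := claimL (n+1) (by omega)
      rw [cast_ur_idx (n+1) ((n:ℤ)+1) (by push_cast; ring)] at this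
      exact this
    have hun4 : u (n+4) = ((ur ((n:ℤ)+1) μ : ℝ):ℂ) * u (2*n+5) := by
      have := claimR (n+1) (by omega)
      rw [show (2*n+5-(n+1):ℕ) = n+4 from by omega,
        cast_ur_idx (n+1) ((n:ℤ)+1) (by push_cast; ring)] at this
      exact this
    have hun5 : u (n+5) = ((ur ((n:ℤ)) μ : ℝ):ℂ) * u (2*n+5) := by
      have := claimR n (by omega)
      rw [show (2*n+5-n:ℕ) = n+5 from by omega] at this
      exact this
    have recA : ((ur ((n:ℤ)+2) μ : ℝ):ℂ)
        = 2*(μ:ℂ)*((ur ((n:ℤ)+1) μ : ℝ):ℂ) - ((ur ((n:ℤ)) μ : ℝ):ℂ) := by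
      exact_mod_cast ur_rec (n:ℤ) μ
    have recB : ((ur ((n:ℤ)+3) μ : ℝ):ℂ)
        = 2*(μ:ℂ)*((ur ((n:ℤ)+2) μ : ℝ):ℂ) - ((ur ((n:ℤ)+1) μ : ℝ):ℂ) := by
      have := ur_rec ((n:ℤ)+1) μ
      rw [ur_congr ((n:ℤ)+1+2) ((n:ℤ)+3) (by ring), ur_congr ((n:ℤ)+1+1) ((n:ℤ)+2) (by ring)] at this
      exact_mod_cast this
    have S1 : u (n+2) + ((ur ((n:ℤ)) μ : ℝ):ℂ) * u 0 + η * u (n+3)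
        = 2*(μ:ℂ)*(((ur ((n:ℤ)+1) μ : ℝ):ℂ) * u 0) := by
      have hr := row (n+1) (by omega)
      rw [if_pos (by omega : (n+1:ℕ) = (n+3)-2), if_neg (by omega : ¬ (n+1:ℕ) = (n+3)-1),
        if_pos (by omega : 1 ≤ n+1), if_neg (by omega : ¬ n+1 = n+3),
        if_neg (by omega : ¬ n+1 = (n+3)+1), Nat.add_sub_cancel] at hr
      rw [hvu (n+1+1), hvu (n+3), hvu n, hvu (n+1)] at hr
      rw [hun, hun1] at hr
      apply mul_left_cancel₀ (pow_ne_zero (n+1) hηne)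
      linear_combination 2*hr - (η^(n+1) * u (n+1+1) + η^(n+2) * u (n+3)) * hc
    have S2 : u (n+3) + ((ur ((n:ℤ)+1) μ : ℝ):ℂ) * u 0
          - η*(((ur ((n:ℤ)+1) μ : ℝ):ℂ) * u (2*n+5))
        = 2*(μ:ℂ)*(u (n+2)) := by
      have hr := row (n+2) (by omega)
      rw [if_neg (by omega : ¬ (n+2:ℕ) = (n+3)-2), if_pos (by omega : (n+2:ℕ) = (n+3)-1),
        if_pos (by omega : 1 ≤ n+2), if_neg (by omega : ¬ n+2 = n+3),
        if_neg (by omega : ¬ n+2 = (n+3)+1), show (n+2-1:ℕ) = n+1 from by omega,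
        show ((n+3)+1:ℕ) = n+4 from by omega] at hr
      rw [hvu (n+2+1), hvu (n+4), hvu (n+1), hvu (n+2)] at hr
      rw [hun1, hun4] at hr
      apply mul_left_cancel₀ (pow_ne_zero (n+2) hηne)
      linear_combination 2*hr - (η^(n+2) * u (n+2+1)
        - η^(n+3) * (((ur ((n:ℤ)+1) μ : ℝ):ℂ) * u (2*n+5))) * hc
    have S3 : ((ur ((n:ℤ)+1) μ : ℝ):ℂ) * u (2*n+5) + u (n+2)
          + η'*(((ur ((n:ℤ)+1) μ : ℝ):ℂ) * u 0)
        = 2*(μ:ℂ)*(u (n+3)) := by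
      have hr := row (n+3) (by omega)
      rw [if_neg (by omega : ¬ (n+3:ℕ) = (n+3)-2), if_neg (by omega : ¬ (n+3:ℕ) = (n+3)-1),
        if_pos (by omega : 1 ≤ n+3), if_pos (rfl : (n+3:ℕ) = n+3),
        if_neg (by omega : ¬ n+3 = (n+3)+1), show (n+3-1:ℕ) = n+2 from by omega,
        show ((n+3)-2:ℕ) = n+1 from by omega, show ((n+3)+1:ℕ) = n+4 from by omega] at hr
      rw [hvu (n+3+1), hvu (n+2), hvu (n+1), hvu (n+3)] at hr
      rw [hun1, hun4] at hr
      apply mul_left_cancel₀ (pow_ne_zero (n+3) hηne)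
      linear_combination 2*hr + (η^(n+2) * (((ur ((n:ℤ)+1) μ : ℝ):ℂ) * u 0)
        - η^(n+3) * (((ur ((n:ℤ)+1) μ : ℝ):ℂ) * u (2*n+5))) * hc
    have S4 : ((ur ((n:ℤ)) μ : ℝ):ℂ) * u (2*n+5) + u (n+3) - η'* u (n+2)
        = 2*(μ:ℂ)*(((ur ((n:ℤ)+1) μ : ℝ):ℂ) * u (2*n+5)) := by
      have hr := row (n+4) (by omega)
      rw [if_neg (by omega : ¬ (n+4:ℕ) = (n+3)-2), if_neg (by omega : ¬ (n+4:ℕ) = (n+3)-1),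
        if_pos (by omega : 1 ≤ n+4), if_neg (by omega : ¬ n+4 = n+3),
        if_pos (by omega : (n+4:ℕ) = (n+3)+1), show (n+4-1:ℕ) = n+3 from by omega,
        show ((n+3)-1:ℕ) = n+2 from by omega] at hr
      rw [hvu (n+4+1), hvu (n+3), hvu (n+2), hvu (n+4)] at hr
      rw [show (n+4+1:ℕ) = n+5 from by omega] at hr
      rw [hun5, hun4] at hr
      apply mul_left_cancel₀ (pow_ne_zero (n+4) hηne)
      linear_combination 2*hr - (η^(n+4) * (((ur ((n:ℤ)) μ : ℝ):ℂ) * u (2*n+5))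
        + η^(n+3) * u (n+2)) * hc
    obtain ⟨hPs, hPt, hb2, hc2⟩ := algebra_key η η' (μ:ℂ)
      ((ur ((n:ℤ)+2) μ : ℝ):ℂ) ((ur ((n:ℤ)+1) μ : ℝ):ℂ) ((ur ((n:ℤ)) μ : ℝ):ℂ)
      ((ur ((n:ℤ)+3) μ : ℝ):ℂ)
      (u 0) (u (2*n+5)) (u (n+2)) (u (n+3)) hc S1 S2 S3 S4 recA recB
    rw [cast_ur_idx (n+3) ((n:ℤ)+3) (by push_cast; ring),
      ur_congr (((n+3:ℕ):ℤ)-1) ((n:ℤ)+2) (by push_cast; ring),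
      ur_congr (((n+3:ℕ):ℤ)-2) ((n:ℤ)+1) (by push_cast; ring)]
    by_contra hne
    have hfac : (((ur ((n:ℤ)+3) μ : ℝ):ℂ) - ((ur ((n:ℤ)+2) μ : ℝ):ℂ) - ((ur ((n:ℤ)+1) μ : ℝ):ℂ))
        * (((ur ((n:ℤ)+3) μ : ℝ):ℂ) + ((ur ((n:ℤ)+2) μ : ℝ):ℂ) - ((ur ((n:ℤ)+1) μ : ℝ):ℂ)) ≠ 0 := by
      intro h
      apply hne
      have : (((ur ((n:ℤ)+3) μ - ur ((n:ℤ)+2) μ - ur ((n:ℤ)+1) μ)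
          * (ur ((n:ℤ)+3) μ + ur ((n:ℤ)+2) μ - ur ((n:ℤ)+1) μ) : ℝ) : ℂ) = 0 := by
        push_cast
        linear_combination h
      exact_mod_cast this
    have hs0 : u 0 = 0 := by
      rcases mul_eq_zero.mp hPs with h | h
      · exact absurd h hfac
      · exact h
    have ht0 : u (2*n+5) = 0 := by
      rcases mul_eq_zero.mp hPt with h | h
      · exact absurd h hfac
      · exact h
    have hb0 : u (n+2) = 0 := by
      have := hb2; rw [hs0, ht0] at this
      have h2 : (2:ℂ) * u (n+2) = 0 := by rw [this]; ring
      simpa using h2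
    have hc0 : u (n+3) = 0 := by
      have := hc2; rw [hs0, ht0] at this
      have h2 : (2:ℂ) * u (n+3) = 0 := by rw [this]; ring
      simpa using h2
    apply hv0
    funext ii
    have hii : (ii:ℕ) < 2*(n+3) := ii.isLt
    have hu : u (ii:ℕ) = 0 := by
      rcases (by omega : (ii:ℕ) ≤ n+1 ∨ (ii:ℕ) = n+2 ∨ (ii:ℕ) = n+3
          ∨ (n+4 ≤ (ii:ℕ) ∧ (ii:ℕ) ≤ 2*n+5)) with h | h | h | ⟨h1, h2⟩
      · rw [claimL _ h, hs0]; ring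
      · rw [h]; exact hb0
      · rw [h]; exact hc0
      · have hcl := claimR (2*n+5-(ii:ℕ)) (by omega)
        rw [show (2*n+5-(2*n+5-(ii:ℕ)):ℕ) = (ii:ℕ) from by omega] at hcl
        rw [hcl, ht0]; ring
    have h1 : vvext v (ii:ℕ) = 0 := by rw [hvu, hu]; ring
    have h2 : vvext v (ii:ℕ) = v ii := by
      unfold vvext; rw [dif_pos ii.isLt]
    rw [← h2, h1]; rfl

lemma largest_and_eigen (m : ℕ) (hm : 2 ≤ m) (lam : ℝ)
    (hroot : ur (m : ℤ) lam - ur ((m : ℤ) - 1) lam - ur ((m : ℤ) - 2) lam = 0)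
    (hmax : ∀ x : ℝ,
        ur (m : ℤ) x - ur ((m : ℤ) - 1) x - ur ((m : ℤ) - 2) x = 0 → x ≤ lam)
    (θ : ℝ) (v : Fin (2 * m) → ℂ) (hvne : v ≠ 0)
    (heig : (Hmat (C2m m) θ).mulVec v = (lam : ℂ) • v) :
    IsLargestEigen (Hmat (C2m m) θ) lam := by
  constructor
  · exact ⟨v, hvne, heig⟩
  · rintro μ ⟨w, hw0, hw⟩
    exact mu_le_lam hm hmax (key m hm θ μ w hw0 hw)

section Vectors
variable {m : ℕ} {lam : ℝ}

lemma exp_zero_eq : Complex.exp (((0:ℝ):ℂ) * Complex.I) = 1 := by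
  norm_num [Complex.exp_zero]

lemma exp_negpi4_eq :
    Complex.exp (((-(Real.pi/4):ℝ):ℂ) * Complex.I)
      = Complex.exp (-(Real.pi / 4 : ℝ) * Complex.I) := by
  rw [Complex.ofReal_neg]

lemma exp_negpi2_eq : Complex.exp (((-(Real.pi/2):ℝ):ℂ) * Complex.I) = -Complex.I := by
  rw [Complex.exp_mul_I]
  rw [show (((-(Real.pi/2):ℝ)):ℂ) = ((-(Real.pi/2):ℝ):ℂ) from rfl]
  rw [← Complex.ofReal_cos, ← Complex.ofReal_sin]
  rw [Real.cos_neg, Real.sin_neg, Real.cos_pi_div_two, Real.sin_pi_div_two]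
  push_cast
  ring

lemma one_add_eta_ne :
    (1 + Complex.exp (-(Real.pi / 4 : ℝ) * Complex.I)) ≠ 0 := by
  intro h
  have hre : (Complex.exp (((-(Real.pi/4):ℝ):ℂ) * Complex.I)).re = Real.cos (-(Real.pi/4)) :=
    Complex.exp_ofReal_mul_I_re _
  rw [Complex.ofReal_neg] at hre
  have h2 : Complex.exp (-((Real.pi/4 : ℝ):ℂ) * Complex.I) = -1 := by
    linear_combination h
  rw [h2] at hre
  rw [Real.cos_neg, Real.cos_pi_div_four] at hre
  have h3 : ((-1 : ℂ)).re = -1 := by norm_num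
  rw [h3] at hre
  nlinarith [Real.sq_sqrt (by norm_num : (2:ℝ) ≥ 0), Real.sqrt_nonneg 2]

lemma eigen0 (hm : 2 ≤ m)
    (hroot : ur (m : ℤ) lam - ur ((m : ℤ) - 1) lam - ur ((m : ℤ) - 2) lam = 0) :
    (Hmat (C2m m) 0).mulVec (v0 m lam) = (lam : ℂ) • v0 m lam := by
  have h := master m hm lam hroot 0 (1/2 : ℂ) 0
    (by rw [exp_zero_eq]; norm_num)
    (by rw [exp_zero_eq]; norm_num)
    (by rw [exp_zero_eq]; norm_num)
    (by rw [exp_zero_eq]; norm_num)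
    (v0 m lam) ?_
  · exact h
  · intro i
    rw [exp_zero_eq, one_pow, one_mul]
    unfold v0 wv
    split_ifs with h1 h2
    · rfl
    · push_cast; ring
    · rw [zero_mul]

lemma eigenq (hm : 2 ≤ m)
    (hroot : ur (m : ℤ) lam - ur ((m : ℤ) - 1) lam - ur ((m : ℤ) - 2) lam = 0) :
    (Hmat (C2m m) (-(Real.pi/4))).mulVec (vq m lam) = (lam : ℂ) • vq m lam := by
  set η := Complex.exp (-(Real.pi / 4 : ℝ) * Complex.I) with hη
  have hE : Complex.exp (((-(Real.pi/4):ℝ):ℂ) * Complex.I) = η := by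
    rw [hη, Complex.ofReal_neg]
  have hc : η * starRingEnd ℂ η = 1 := by
    have := eta_mul_conj (-(Real.pi/4))
    rw [Complex.ofReal_neg] at this
    exact this
  have hne : (1 + η) ≠ 0 := one_add_eta_ne
  have h := master m hm lam hroot (-(Real.pi/4)) (1/(1+η)) ((1 - starRingEnd ℂ η)/(1+η))
    (by rw [hE]; field_simp)
    (by rw [hE]; field_simp; first | linear_combination hc | linear_combination -hc | linear_combination 2*hc | linear_combination -2*hc | ring)
    (by rw [hE]; field_simp; first | linear_combination hc | linear_combination -hc | linear_combination 2*hc | linear_combination -2*hc | ring)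
    (by rw [hE]; field_simp)
    (vq m lam) ?_
  · exact h
  · intro i
    rw [hE]
    unfold vq wv
    rfl

lemma eigenh (hm : 2 ≤ m)
    (hroot : ur (m : ℤ) lam - ur ((m : ℤ) - 1) lam - ur ((m : ℤ) - 2) lam = 0) :
    (Hmat (C2m m) (-(Real.pi/2))).mulVec (vh m lam) = (lam : ℂ) • vh m lam := by
  have hI : (Complex.I : ℂ) * Complex.I = -1 := Complex.I_mul_I
  have hconj : starRingEnd ℂ (-Complex.I) = Complex.I := by
    rw [map_neg, Complex.conj_I]; ring
  have h := master m hm lam hroot (-(Real.pi/2)) ((1 + Complex.I)/2) 1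
    (by rw [exp_negpi2_eq]; linear_combination (-1/2 : ℂ) * hI)
    (by rw [exp_negpi2_eq]; linear_combination 0 * hI)
    (by rw [exp_negpi2_eq, hconj]; ring)
    (by rw [exp_negpi2_eq, hconj]; linear_combination (-1/2 : ℂ) * hI)
    (vh m lam) ?_
  · exact h
  · intro i
    rw [exp_negpi2_eq]
    unfold vh wv
    split_ifs with h1 h2
    · rfl
    · rfl
    · rw [one_mul]

lemma v0_ne (hm : 2 ≤ m) : v0 m lam ≠ 0 := by
  intro h
  have h0 := congrFun h ⟨0, by omega⟩
  rw [show v0 m lam ⟨0, by omega⟩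
      = ((ur ((0:ℕ):ℤ) lam : ℝ):ℂ) from by unfold v0; rw [if_pos (show (0:ℕ) < m - 1 by omega)],
    cast_ur_idx 0 0 (by norm_num), ur_zero] at h0
  simp at h0

lemma vq_ne (hm : 2 ≤ m) : vq m lam ≠ 0 := by
  intro h
  have h0 := congrFun h ⟨0, by omega⟩
  rw [show vq m lam ⟨0, by omega⟩
      = (Complex.exp (-(Real.pi / 4 : ℝ) * Complex.I)) ^ (0:ℕ) * ((ur ((0:ℕ):ℤ) lam : ℝ):ℂ)
      from by unfold vq; rw [if_pos (show (0:ℕ) < m - 1 by omega)],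
    cast_ur_idx 0 0 (by norm_num), ur_zero, pow_zero, one_mul] at h0
  simp at h0

lemma vh_ne (hm : 2 ≤ m) : vh m lam ≠ 0 := by
  intro h
  have h0 := congrFun h ⟨0, by omega⟩
  rw [show vh m lam ⟨0, by omega⟩
      = (-Complex.I) ^ (0:ℕ) * ((ur ((0:ℕ):ℤ) lam : ℝ):ℂ)
      from by unfold vh; rw [if_pos (show (0:ℕ) < m - 1 by omega)],
    cast_ur_idx 0 0 (by norm_num), ur_zero, pow_zero, one_mul] at h0
  simp at h0

end Vectors

theorem stmt18 (m : ℕ) (hm : 2 ≤ m) (lam : ℝ)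
    (hroot : ur (m : ℤ) lam - ur ((m : ℤ) - 1) lam - ur ((m : ℤ) - 2) lam = 0)
    (hmax : ∀ x : ℝ,
        ur (m : ℤ) x - ur ((m : ℤ) - 1) x - ur ((m : ℤ) - 2) x = 0 → x ≤ lam) :
    IsLargestEigen (Hmat (C2m m) 0) lam ∧
    IsLargestEigen (Hmat (C2m m) (-(Real.pi / 4))) lam ∧
    IsLargestEigen (Hmat (C2m m) (-(Real.pi / 2))) lam ∧
    (Hmat (C2m m) 0).mulVec (v0 m lam) = (lam : ℂ) • v0 m lam ∧
    (Hmat (C2m m) (-(Real.pi / 4))).mulVec (vq m lam) = (lam : ℂ) • vq m lam ∧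
    (Hmat (C2m m) (-(Real.pi / 2))).mulVec (vh m lam) = (lam : ℂ) • vh m lam := by
  have e0 := eigen0 hm hroot
  have eq := eigenq hm hroot
  have eh := eigenh hm hroot
  exact ⟨largest_and_eigen m hm lam hroot hmax 0 _ (v0_ne hm) e0,
    largest_and_eigen m hm lam hroot hmax _ _ (vq_ne hm) eq,
    largest_and_eigen m hm lam hroot hmax _ _ (vh_ne hm) eh,
    e0, eq, eh⟩
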